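/- arXiv:2107.04864 — 3 statements merged into one kernel-verified Lean document; each statement's English description precedes it below -/
import Mathlib

section
/- Let θ ∈ ℝ, c = cos θ, s = sin θ. Under the stated kinematics (on-shell conditions with mass m > 0), the odd operators on Λ given by Q_{iα}^A = Σ_I (λᵢᴵ)_α (c η_{iI}^A + s σᵢ ∂/∂η_{iA}^I), Q̃_{iα̇A} = Σ_I (λ̃ᵢᴵ)_{α̇} (c ∂/∂η_i^{IA} − s σᵢ η_{iIA}), Q_{Pα}^A = (λ_P)_α η_P^A, Q̃_{Pα̇A} = (λ̃_P)_{α̇} ∂/∂η_P^A satisfy — with {X,Y} = XY + YX — the centrally extended N=2 supersymmetry algebra: {Q_{iα}^A, Q̃_{jβ̇B}} = δ_{ij} (pᵢ)_{αβ̇} δ^A_B · id, {Q_{iα}^A, Q_{jβ}^B} = δ_{ij} · ½ Zᵢ ε^{AB} ε_{αβ} · id, {Q̃_{iα̇A}, Q̃_{jβ̇B}} = −δ_{ij} · ½ Zᵢ ε_{AB} ε_{α̇β̇} · id where Zᵢ = 2m sin(2θ) σᵢ, {Q_{Pα}^A, Q̃_{Pβ̇B}} = P_{αβ̇} δ^A_B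 · id, {Q_{Pα}^A, Q_{Pβ}^B} = 0, {Q̃_{Pα̇A}, Q̃_{Pβ̇B}} = 0, and every anticommutator between a massive-leg generator and a massless-leg generator vanishes. -/
/-!
Common setup: spinor-helicity kinematics over ℂ and the exterior (Grassmann) algebra Λ
on the 10 generators η_{iI}^A (i,I,A ∈ {1,2}) and η_P^A (A ∈ {1,2}).
Index value `0 : Fin 2` corresponds to the index "1" of the paper, `1 : Fin 2` to "2".
-/

noncomputable section

open scoped BigOperators

/-- Index type for the Grassmann generators: `inl (i,I,A)` is η_{iI}^A, `inr A` is η_P^A. -/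
abbrev GIdx : Type := (Fin 2 × Fin 2 × Fin 2) ⊕ Fin 2

/-- The underlying 10-dimensional complex vector space. -/
abbrev GV : Type := GIdx → ℂ

/-- The Grassmann algebra Λ. -/
abbrev Lam : Type := ExteriorAlgebra ℂ GV

/-- η_{iI}^A -/
def ηm (i I A : Fin 2) : Lam := ExteriorAlgebra.ι ℂ (Pi.single (Sum.inl (i, I, A)) 1)

/-- η_P^A -/
def ηP (A : Fin 2) : Lam := ExteriorAlgebra.ι ℂ (Pi.single (Sum.inr A) 1)

/-- evaluation functional dual to the basis vector `g` -/
def gdual (g : GIdx) : Module.Dual ℂ GV := LinearMap.proj g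

/-- ∂/∂η_{iI}^A : the odd derivation (interior product) dual to η_{iI}^A. -/
def dm (i I A : Fin 2) : Lam →ₗ[ℂ] Lam :=
  CliffordAlgebra.contractLeft (gdual (Sum.inl (i, I, A)))

/-- ∂/∂η_P^A -/
def dP (A : Fin 2) : Lam →ₗ[ℂ] Lam :=
  CliffordAlgebra.contractLeft (gdual (Sum.inr A))

/-- ε with upper indices: ε^{12} = 1 (i.e. `epsUp 0 1 = 1`). -/
def epsUp : Fin 2 → Fin 2 → ℂ := fun a b =>
  if a = 0 ∧ b = 1 then 1 else if a = 1 ∧ b = 0 then -1 else 0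

/-- ε with lower indices: ε_{12} = −1. -/
def epsLo : Fin 2 → Fin 2 → ℂ := fun a b => -epsUp a b

/-- (σ₁, σ₂) = (1, −1) -/
def sgn : Fin 2 → ℂ := fun i => if i = 0 then 1 else -1

/-- angle bracket ⟨ab⟩ = a₂b₁ − a₁b₂ -/
def angB (a b : Fin 2 → ℂ) : ℂ := a 1 * b 0 - a 0 * b 1

/-- square bracket [ab] = a₁b₂ − a₂b₁ -/
def sqB (a b : Fin 2 → ℂ) : ℂ := a 0 * b 1 - a 1 * b 0

/-- the I-th column λᵢᴵ of a 2×2 spinor-helicity matrix (row index α, column index I). -/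
def col (lam : Fin 2 → Matrix (Fin 2) (Fin 2) ℂ) (i I : Fin 2) : Fin 2 → ℂ :=
  fun α => lam i α I

/-- momentum bispinor (pᵢ)_{αα̇} = Σ_{I,J} ε_{IJ}(λᵢᴵ)_α(λ̃ᵢᴶ)_{α̇} -/
def pmat (lam lamt : Fin 2 → Matrix (Fin 2) (Fin 2) ℂ) (i : Fin 2) (α β : Fin 2) : ℂ :=
  ∑ I : Fin 2, ∑ J : Fin 2, epsLo I J * lam i α I * lamt i β J

/-- on-shell conditions with mass m: ⟨λᵢᴵλᵢᴶ⟩ = −m ε^{IJ}, [λ̃ᵢᴵλ̃ᵢᴶ] = m ε^{IJ}. -/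
def OnShell (lam lamt : Fin 2 → Matrix (Fin 2) (Fin 2) ℂ) (m : ℝ) : Prop :=
  ∀ i I J : Fin 2,
    angB (col lam i I) (col lam i J) = -(m : ℂ) * epsUp I J ∧
    sqB (col lamt i I) (col lamt i J) = (m : ℂ) * epsUp I J

/-- momentum conservation p₁ + p₂ + P = 0 -/
def MomCons (lam lamt : Fin 2 → Matrix (Fin 2) (Fin 2) ℂ) (lamP lamtP : Fin 2 → ℂ) : Prop :=
  ∀ α β : Fin 2,
    pmat lam lamt 0 α β + pmat lam lamt 1 α β + lamP α * lamtP β = 0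

/-- the x-factor relation x(λ_P)_α = (1/m)Σ_{α̇}(p₁)_{αα̇}(λ̃_P)^{α̇} -/
def XFac (lam lamt : Fin 2 → Matrix (Fin 2) (Fin 2) ℂ) (lamP lamtP : Fin 2 → ℂ)
    (m : ℝ) (x : ℂ) : Prop :=
  ∀ α : Fin 2,
    x * lamP α = (1 / (m : ℂ)) * ∑ β : Fin 2, pmat lam lamt 0 α β * (∑ γ : Fin 2, epsUp β γ * lamtP γ)

variable (lam lamt : Fin 2 → Matrix (Fin 2) (Fin 2) ℂ) (lamP lamtP : Fin 2 → ℂ)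
  (ζ ξ : Fin 2 → ℂ)

/-- fermionic delta δ^A = Σ_{i,I}⟨λ_Pλᵢᴵ⟩η_{iI}^A -/
def fdelta (A : Fin 2) : Lam :=
  ∑ i : Fin 2, ∑ I : Fin 2, angB lamP (col lam i I) • ηm i I A

/-- δ¹δ² -/
def fdelta2 : Lam := fdelta lam lamP 0 * fdelta lam lamP 1

/-- H^A = (1/⟨ζλ_P⟩)Σ_{i,I}⟨ζλᵢᴵ⟩η_{iI}^A -/
def Ha (A : Fin 2) : Lam :=
  (angB ζ lamP)⁻¹ • ∑ i : Fin 2, ∑ I : Fin 2, angB ζ (col lam i I) • ηm i I A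

/-- H̄^A = (1/[ξλ̃_P])Σ_{i,I}σᵢ[ξλ̃ᵢᴵ]η_{iI}^A -/
def Hb (A : Fin 2) : Lam :=
  (sqB ξ lamtP)⁻¹ • ∑ i : Fin 2, ∑ I : Fin 2, (sgn i * sqB ξ (col lamt i I)) • ηm i I A

/-- H_A = ε_{AB}H^B -/
def HaLo (A : Fin 2) : Lam := ∑ B : Fin 2, epsLo A B • Ha lam lamP ζ B

/-- H̄_A = ε_{AB}H̄^B -/
def HbLo (A : Fin 2) : Lam := ∑ B : Fin 2, epsLo A B • Hb lamt lamtP ξ B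

/-- η_{PA} = ε_{AB}η_P^B -/
def ηPLo (A : Fin 2) : Lam := ∑ B : Fin 2, epsLo A B • ηP B

/-- η_{iIA} = ε_{AB}η_{iI}^B -/
def ηmLoA (i I A : Fin 2) : Lam := ∑ B : Fin 2, epsLo A B • ηm i I B

/-- (H·H) = ½Σ_A H^A H_A -/
def HH : Lam := (2 : ℂ)⁻¹ • ∑ A : Fin 2, Ha lam lamP ζ A * HaLo lam lamP ζ A

/-- (H̄·H̄) = ½Σ_A H̄^A H̄_A -/
def HbHb : Lam := (2 : ℂ)⁻¹ • ∑ A : Fin 2, Hb lamt lamtP ξ A * HbLo lamt lamtP ξ A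

/-- (H·H̄) = ½Σ_A H^A H̄_A -/
def HHb : Lam :=
  (2 : ℂ)⁻¹ • ∑ A : Fin 2, Ha lam lamP ζ A * HbLo lamt lamtP ξ A

/-- (η_P·η_P) = ½Σ_A η_P^A η_{PA} -/
def ηPηP : Lam := (2 : ℂ)⁻¹ • ∑ A : Fin 2, ηP A * ηPLo A

/-- (ηᵢ·ηᵢ)^A = −½ Σ_{I,J} ε^{IJ} η_{iI}^A η_{iJ}^A (no sum over A) -/
def ηiηi (i A : Fin 2) : Lam :=
  (-(2 : ℂ)⁻¹) • ∑ I : Fin 2, ∑ J : Fin 2, epsUp I J • (ηm i I A * ηm i J A)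

/-- ∂/∂η_{iA}^I (upper I, lower A) = ε_{IJ} ε^{AB} ∂/∂η_{iJ}^B -/
def dUpIloA (i I A : Fin 2) : Lam →ₗ[ℂ] Lam :=
  ∑ J : Fin 2, ∑ B : Fin 2, (epsLo I J * epsUp A B) • dm i J B

/-- ∂/∂η_i^{IA} = −ε_{IJ} ∂/∂η_{iJ}^A -/
def dUpIA (i I A : Fin 2) : Lam →ₗ[ℂ] Lam :=
  ∑ J : Fin 2, (-epsLo I J) • dm i J A

variable (θ : ℝ)

/-- Q_{iα}^A = Σ_I (λᵢᴵ)_α (c η_{iI}^A + s σᵢ ∂/∂η_{iA}^I) -/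
def Qm (i α A : Fin 2) : Lam →ₗ[ℂ] Lam :=
  ∑ I : Fin 2, lam i α I •
    ((Real.cos θ : ℂ) • LinearMap.mulLeft ℂ (ηm i I A)
      + ((Real.sin θ : ℂ) * sgn i) • dUpIloA i I A)

/-- Q̃_{iα̇A} = Σ_I (λ̃ᵢᴵ)_{α̇} (c ∂/∂η_i^{IA} − s σᵢ η_{iIA}) -/
def Qtm (i α A : Fin 2) : Lam →ₗ[ℂ] Lam :=
  ∑ I : Fin 2, lamt i α I •
    ((Real.cos θ : ℂ) • dUpIA i I A
      - ((Real.sin θ : ℂ) * sgn i) • LinearMap.mulLeft ℂ (ηmLoA i I A))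

/-- Q_{Pα}^A = (λ_P)_α η_P^A -/
def QmP (α A : Fin 2) : Lam →ₗ[ℂ] Lam := lamP α • LinearMap.mulLeft ℂ (ηP A)

/-- Q̃_{Pα̇A} = (λ̃_P)_{α̇} ∂/∂η_P^A -/
def QtmP (α A : Fin 2) : Lam →ₗ[ℂ] Lam := lamtP α • dP A

/-- total Q_α^A -/
def Qtot (α A : Fin 2) : Lam →ₗ[ℂ] Lam :=
  Qm lam θ 0 α A + Qm lam θ 1 α A + QmP lamP α A

/-- total Q̃_{α̇A} -/
def Qttot (α A : Fin 2) : Lam →ₗ[ℂ] Lam :=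
  Qtm lamt θ 0 α A + Qtm lamt θ 1 α A + QtmP lamtP α A

/-- anticommutator of operators -/
def acomm (X Y : Lam →ₗ[ℂ] Lam) : Lam →ₗ[ℂ] Lam := X ∘ₗ Y + Y ∘ₗ X

/-- f^(1) -/
def f1 : Lam :=
  ((Real.cos θ : ℂ) ^ 2)⁻¹ • HH lam lamP ζ

/-- g^(1)_A -/
def g1 (A : Fin 2) : Lam :=
  ((Real.cos θ : ℂ))⁻¹ • HaLo lam lamP ζ A
    + ((Real.sin θ : ℂ) / (Real.cos θ : ℂ) ^ 2) • (HH lam lamP ζ * HbLo lamt lamtP ξ A)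

/-- h^(1) -/
def h1 : Lam :=
  1 - (2 * (Real.sin θ : ℂ) / (Real.cos θ : ℂ)) • HHb lam lamt lamP lamtP ζ ξ
    + ((Real.sin θ : ℂ) ^ 2 / (Real.cos θ : ℂ) ^ 2) •
        (HH lam lamP ζ * HbHb lamt lamtP ξ)

/-- S^(1)(θ) = c² δ¹δ² ( f^(1) + Σ_A η_P^A g^(1)_A + ½ Σ_A η_P^A η_{PA} h^(1) ) -/
def S1 : Lam :=
  ((Real.cos θ : ℂ) ^ 2) •
    (fdelta2 lam lamP *
      (f1 lam lamP ζ θ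
        + (∑ A : Fin 2, ηP A * g1 lam lamt lamP lamtP ζ ξ θ A)
        + (2 : ℂ)⁻¹ • ∑ A : Fin 2, (ηP A * ηPLo A) * h1 lam lamt lamP lamtP ζ ξ θ))

/-- f^(2) -/
def f2 : Lam :=
  algebraMap ℂ Lam ((Real.sin θ : ℂ) ^ 2)
    + (2 * (Real.cos θ : ℂ) * (Real.sin θ : ℂ)) • HHb lam lamt lamP lamtP ζ ξ
    + ((Real.cos θ : ℂ) ^ 2) • (HH lam lamP ζ * HbHb lamt lamtP ξ)

/-- g^(2)_A -/
def g2 (A : Fin 2) : Lam :=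
  (Real.cos θ : ℂ) • (HaLo lam lamP ζ A * HbHb lamt lamtP ξ)
    + (Real.sin θ : ℂ) • HbLo lamt lamtP ξ A

/-- h^(2) -/
def h2 : Lam := HbHb lamt lamtP ξ

/-- S^(2)(θ) = −x δ¹δ² ( f^(2) + Σ_A η_P^A g^(2)_A + ½ Σ_A η_P^A η_{PA} h^(2) ) -/
def S2 (x : ℂ) : Lam :=
  (-x) •
    (fdelta2 lam lamP *
      (f2 lam lamt lamP lamtP ζ ξ θ
        + (∑ A : Fin 2, ηP A * g2 lam lamt lamP lamtP ζ ξ θ A)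
        + (2 : ℂ)⁻¹ • ∑ A : Fin 2, (ηP A * ηPLo A) * h2 lamt lamtP ξ))



/-! ### Auxiliary lemmas -/

lemma acomm_mulL_mulL (u v : GV) :
    acomm (LinearMap.mulLeft ℂ (ExteriorAlgebra.ι ℂ u)) (LinearMap.mulLeft ℂ (ExteriorAlgebra.ι ℂ v)) = 0 := by
  refine LinearMap.ext fun x => ?_
  simp only [acomm, LinearMap.add_apply, LinearMap.comp_apply, LinearMap.mulLeft_apply,
    LinearMap.zero_apply, ← mul_assoc, ← add_mul]
  rw [ExteriorAlgebra.ι_add_mul_swap, zero_mul]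

lemma acomm_dL_dL (f g : Module.Dual ℂ GV) :
    acomm (CliffordAlgebra.contractLeft f) (CliffordAlgebra.contractLeft g) = 0 := by
  refine LinearMap.ext fun x => ?_
  simp only [acomm, LinearMap.add_apply, LinearMap.comp_apply, LinearMap.zero_apply]
  rw [CliffordAlgebra.contractLeft_comm]
  abel

lemma acomm_dL_mulL (f : Module.Dual ℂ GV) (v : GV) :
    acomm (CliffordAlgebra.contractLeft f) (LinearMap.mulLeft ℂ (ExteriorAlgebra.ι ℂ v))
      = f v • (LinearMap.id : Lam →ₗ[ℂ] Lam) := by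
  refine LinearMap.ext fun x => ?_
  simp only [acomm, LinearMap.add_apply, LinearMap.comp_apply, LinearMap.mulLeft_apply,
    LinearMap.smul_apply, LinearMap.id_apply]
  rw [show ExteriorAlgebra.ι ℂ v * x = CliffordAlgebra.ι (0 : QuadraticForm ℂ GV) v * x from rfl,
    CliffordAlgebra.contractLeft_ι_mul]
  abel

lemma acomm_mulL_dL (f : Module.Dual ℂ GV) (v : GV) :
    acomm (LinearMap.mulLeft ℂ (ExteriorAlgebra.ι ℂ v)) (CliffordAlgebra.contractLeft f)
      = f v • (LinearMap.id : Lam →ₗ[ℂ] Lam) := by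
  rw [show acomm (LinearMap.mulLeft ℂ (ExteriorAlgebra.ι ℂ v)) (CliffordAlgebra.contractLeft f)
    = acomm (CliffordAlgebra.contractLeft f) (LinearMap.mulLeft ℂ (ExteriorAlgebra.ι ℂ v)) from
    add_comm _ _, acomm_dL_mulL]

lemma acomm_add_left (X Y Z : Lam →ₗ[ℂ] Lam) : acomm (X + Y) Z = acomm X Z + acomm Y Z := by
  simp only [acomm, LinearMap.add_comp, LinearMap.comp_add]; abel
lemma acomm_add_right (X Y Z : Lam →ₗ[ℂ] Lam) : acomm X (Y + Z) = acomm X Y + acomm X Z := by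
  simp only [acomm, LinearMap.add_comp, LinearMap.comp_add]; abel
lemma acomm_sub_left (X Y Z : Lam →ₗ[ℂ] Lam) : acomm (X - Y) Z = acomm X Z - acomm Y Z := by
  simp only [acomm, LinearMap.sub_comp, LinearMap.comp_sub]; abel
lemma acomm_sub_right (X Y Z : Lam →ₗ[ℂ] Lam) : acomm X (Y - Z) = acomm X Y - acomm X Z := by
  simp only [acomm, LinearMap.sub_comp, LinearMap.comp_sub]; abel
lemma acomm_smul_left (c : ℂ) (X Z : Lam →ₗ[ℂ] Lam) : acomm (c • X) Z = c • acomm X Z := by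
  simp only [acomm, LinearMap.smul_comp, LinearMap.comp_smul, smul_add]
lemma acomm_smul_right (c : ℂ) (X Z : Lam →ₗ[ℂ] Lam) : acomm X (c • Z) = c • acomm X Z := by
  simp only [acomm, LinearMap.smul_comp, LinearMap.comp_smul, smul_add]

lemma mulLeft_add' (a b : Lam) :
    LinearMap.mulLeft ℂ (a + b) = LinearMap.mulLeft ℂ a + LinearMap.mulLeft ℂ b := by
  refine LinearMap.ext fun x => ?_; simp [add_mul]
lemma mulLeft_smul' (c : ℂ) (a : Lam) :
    LinearMap.mulLeft ℂ (c • a) = c • LinearMap.mulLeft ℂ a := by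
  refine LinearMap.ext fun x => ?_; simp [smul_mul_assoc]

lemma gdual_single (g h : GIdx) : gdual g (Pi.single h 1) = if g = h then 1 else 0 := by
  simp [gdual, Pi.single_apply]

lemma acomm_dm_ηm (i I A j J B : Fin 2) :
    acomm (dm i I A) (LinearMap.mulLeft ℂ (ηm j J B))
      = (if i = j ∧ I = J ∧ A = B then (1:ℂ) else 0) • (LinearMap.id : Lam →ₗ[ℂ] Lam) := by
  rw [dm, ηm, acomm_dL_mulL, gdual_single]
  simp [Prod.ext_iff, eq_comm]

lemma acomm_ηm_dm (i I A j J B : Fin 2) :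
    acomm (LinearMap.mulLeft ℂ (ηm i I A)) (dm j J B)
      = (if i = j ∧ I = J ∧ A = B then (1:ℂ) else 0) • (LinearMap.id : Lam →ₗ[ℂ] Lam) := by
  rw [dm, ηm, acomm_mulL_dL, gdual_single]
  simp [Prod.ext_iff, eq_comm]

lemma acomm_dP_ηP (A B : Fin 2) :
    acomm (dP A) (LinearMap.mulLeft ℂ (ηP B))
      = (if A = B then (1:ℂ) else 0) • (LinearMap.id : Lam →ₗ[ℂ] Lam) := by
  rw [dP, ηP, acomm_dL_mulL, gdual_single]
  simp [eq_comm]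

lemma acomm_ηP_dP (A B : Fin 2) :
    acomm (LinearMap.mulLeft ℂ (ηP A)) (dP B)
      = (if A = B then (1:ℂ) else 0) • (LinearMap.id : Lam →ₗ[ℂ] Lam) := by
  rw [dP, ηP, acomm_mulL_dL, gdual_single]
  simp [eq_comm]

lemma acomm_dm_ηP (i I A B : Fin 2) :
    acomm (dm i I A) (LinearMap.mulLeft ℂ (ηP B)) = 0 := by
  rw [dm, ηP, acomm_dL_mulL, gdual_single]
  simp

lemma acomm_ηP_dm (i I A B : Fin 2) :
    acomm (LinearMap.mulLeft ℂ (ηP B)) (dm i I A) = 0 := by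
  rw [dm, ηP, acomm_mulL_dL, gdual_single]
  simp

lemma acomm_dP_ηm (i I A B : Fin 2) :
    acomm (dP B) (LinearMap.mulLeft ℂ (ηm i I A)) = 0 := by
  rw [dP, ηm, acomm_dL_mulL, gdual_single]
  simp

lemma acomm_ηm_dP (i I A B : Fin 2) :
    acomm (LinearMap.mulLeft ℂ (ηm i I A)) (dP B) = 0 := by
  rw [dP, ηm, acomm_mulL_dL, gdual_single]
  simp

lemma acomm_ηm_ηm (i I A j J B : Fin 2) :
    acomm (LinearMap.mulLeft ℂ (ηm i I A)) (LinearMap.mulLeft ℂ (ηm j J B)) = 0 := by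
  rw [ηm, ηm]; exact acomm_mulL_mulL _ _
lemma acomm_ηm_ηP (i I A B : Fin 2) :
    acomm (LinearMap.mulLeft ℂ (ηm i I A)) (LinearMap.mulLeft ℂ (ηP B)) = 0 := by
  rw [ηm, ηP]; exact acomm_mulL_mulL _ _
lemma acomm_ηP_ηm (i I A B : Fin 2) :
    acomm (LinearMap.mulLeft ℂ (ηP B)) (LinearMap.mulLeft ℂ (ηm i I A)) = 0 := by
  rw [ηm, ηP]; exact acomm_mulL_mulL _ _
lemma acomm_ηP_ηP (A B : Fin 2) :
    acomm (LinearMap.mulLeft ℂ (ηP A)) (LinearMap.mulLeft ℂ (ηP B)) = 0 := by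
  rw [ηP, ηP]; exact acomm_mulL_mulL _ _
lemma acomm_dm_dm (i I A j J B : Fin 2) : acomm (dm i I A) (dm j J B) = 0 := by
  rw [dm, dm]; exact acomm_dL_dL _ _
lemma acomm_dm_dP (i I A B : Fin 2) : acomm (dm i I A) (dP B) = 0 := by
  rw [dm, dP]; exact acomm_dL_dL _ _
lemma acomm_dP_dm (i I A B : Fin 2) : acomm (dP B) (dm i I A) = 0 := by
  rw [dm, dP]; exact acomm_dL_dL _ _
lemma acomm_dP_dP (A B : Fin 2) : acomm (dP A) (dP B) = 0 := by
  rw [dP, dP]; exact acomm_dL_dL _ _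

set_option maxHeartbeats 4000000 in
/-- the generators satisfy the centrally extended N=2 SUSY algebra. -/
theorem susy_algebra
    (lam lamt : Fin 2 → Matrix (Fin 2) (Fin 2) ℂ) (lamP lamtP : Fin 2 → ℂ)
    (m θ : ℝ) (hm : 0 < m) (hos : OnShell lam lamt m) :
    (∀ i j α β A B : Fin 2,
      acomm (Qm lam θ i α A) (Qtm lamt θ j β B)
        = ((if i = j then (1 : ℂ) else 0) * pmat lam lamt i α β
            * (if A = B then 1 else 0)) • (LinearMap.id : Lam →ₗ[ℂ] Lam))
    ∧ (∀ i j α β A B : Fin 2,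
      acomm (Qm lam θ i α A) (Qm lam θ j β B)
        = ((if i = j then (1 : ℂ) else 0) * (2 : ℂ)⁻¹
            * (2 * (m : ℂ) * (Real.sin (2 * θ) : ℂ) * sgn i)
            * epsUp A B * epsLo α β) • (LinearMap.id : Lam →ₗ[ℂ] Lam))
    ∧ (∀ i j α β A B : Fin 2,
      acomm (Qtm lamt θ i α A) (Qtm lamt θ j β B)
        = (-((if i = j then (1 : ℂ) else 0) * (2 : ℂ)⁻¹
            * (2 * (m : ℂ) * (Real.sin (2 * θ) : ℂ) * sgn i)
            * epsLo A B * epsLo α β)) • (LinearMap.id : Lam →ₗ[ℂ] Lam))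
    ∧ (∀ α β A B : Fin 2,
      acomm (QmP lamP α A) (QtmP lamtP β B)
        = (lamP α * lamtP β * (if A = B then 1 else 0)) • (LinearMap.id : Lam →ₗ[ℂ] Lam))
    ∧ (∀ α β A B : Fin 2, acomm (QmP lamP α A) (QmP lamP β B) = 0)
    ∧ (∀ α β A B : Fin 2, acomm (QtmP lamtP α A) (QtmP lamtP β B) = 0)
    ∧ (∀ i α β A B : Fin 2, acomm (Qm lam θ i α A) (QmP lamP β B) = 0)
    ∧ (∀ i α β A B : Fin 2, acomm (Qm lam θ i α A) (QtmP lamtP β B) = 0)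
    ∧ (∀ i α β A B : Fin 2, acomm (Qtm lamt θ i α A) (QmP lamP β B) = 0)
    ∧ (∀ i α β A B : Fin 2, acomm (Qtm lamt θ i α A) (QtmP lamtP β B) = 0) := by
  classical
  have hσ : ∀ i : Fin 2, sgn i * sgn i = 1 := by intro i; fin_cases i <;> norm_num [sgn]
  have hsc : Complex.cos θ ^ 2 + Complex.sin θ ^ 2 = 1 := Complex.cos_sq_add_sin_sq _
  have hs2 : Complex.sin (2 * (θ : ℂ)) = 2 * Complex.sin θ * Complex.cos θ :=
    Complex.sin_two_mul _
  have epsUp00 : epsUp 0 0 = 0 := by norm_num [epsUp]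
  have epsUp01 : epsUp 0 1 = 1 := by norm_num [epsUp]
  have epsUp10 : epsUp 1 0 = -1 := by norm_num [epsUp]
  have epsUp11 : epsUp 1 1 = 0 := by norm_num [epsUp]
  have epsLo_eq : ∀ a b : Fin 2, epsLo a b = -epsUp a b := fun _ _ => rfl
  have hlam : ∀ i α β : Fin 2,
      lam i α 0 * lam i β 1 - lam i α 1 * lam i β 0 = (m : ℂ) * epsUp α β := by
    intro i α β
    have h := (hos i 0 1).1
    simp only [angB, col, epsUp01, mul_one] at h
    fin_cases α <;> fin_cases β <;> norm_num [epsUp] <;>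
      first | ring1 | linear_combination -h | linear_combination h
  have hlamt : ∀ i α β : Fin 2,
      lamt i α 0 * lamt i β 1 - lamt i α 1 * lamt i β 0 = (m : ℂ) * epsUp α β := by
    intro i α β
    have h := (hos i 0 1).2
    simp only [sqB, col, epsUp01, mul_one] at h
    fin_cases α <;> fin_cases β <;> norm_num [epsUp] <;>
      first | ring1 | linear_combination h | linear_combination -h
  refine ⟨?_, ?_, ?_, ?_, ?_, ?_, ?_, ?_, ?_, ?_⟩
  · -- {Qm, Qtm}
    intro i j α β A B
    simp only [Qm, Qtm, dUpIloA, dUpIA, ηmLoA, Fin.sum_univ_two, mulLeft_add', mulLeft_smul',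
      acomm_add_left, acomm_add_right, acomm_sub_left, acomm_sub_right,
      acomm_smul_left, acomm_smul_right,
      acomm_dm_ηm, acomm_ηm_dm, acomm_ηm_ηm, acomm_dm_dm,
      smul_zero, zero_smul, smul_smul, add_zero, zero_add, sub_zero, zero_sub]
    rcases eq_or_ne i j with rfl | hij
    · fin_cases A <;> fin_cases B <;>
        simp [epsLo, epsUp, pmat, Fin.sum_univ_two]
      all_goals match_scalars
      all_goals first
        | ring1
        | linear_combination ((lam i α 1 * lamt i β 0 - lam i α 0 * lamt i β 1) *
            Complex.sin θ ^ 2) * hσ i +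
            (lam i α 1 * lamt i β 0 - lam i α 0 * lamt i β 1) * hsc
        | linear_combination (-(lam i α 1 * lamt i β 0 - lam i α 0 * lamt i β 1) *
            Complex.sin θ ^ 2) * hσ i +
            (-(lam i α 1 * lamt i β 0 - lam i α 0 * lamt i β 1)) * hsc
    · simp only [hij, false_and, if_false, mul_zero, zero_mul, smul_zero, zero_smul,
        add_zero, zero_add, sub_zero, zero_sub, neg_zero, ite_false, mul_ite, mul_one,
        ite_self]
  · -- {Qm, Qm}
    intro i j α β A B
    simp only [Qm, dUpIloA, Fin.sum_univ_two, mulLeft_add', mulLeft_smul',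
      acomm_add_left, acomm_add_right, acomm_smul_left, acomm_smul_right,
      acomm_dm_ηm, acomm_ηm_dm, acomm_ηm_ηm, acomm_dm_dm,
      smul_zero, zero_smul, smul_smul, add_zero, zero_add]
    rcases eq_or_ne i j with rfl | hij
    · fin_cases A <;> fin_cases B <;>
        simp [epsLo_eq, epsUp00, epsUp01, epsUp10, epsUp11]
      all_goals match_scalars
      all_goals first
        | ring1
        | linear_combination (-2 * Complex.sin θ * Complex.cos θ * sgn i) * hlam i α β +
            ((m : ℂ) * sgn i * epsUp α β) * hs2
        | linear_combination (2 * Complex.sin θ * Complex.cos θ * sgn i) * hlam i α β +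
            (-(m : ℂ) * sgn i * epsUp α β) * hs2
        | linear_combination (-2 * Complex.sin θ * Complex.cos θ * sgn i) * hlam i α β +
            (-(m : ℂ) * sgn i * epsUp α β) * hs2
        | linear_combination (2 * Complex.sin θ * Complex.cos θ * sgn i) * hlam i α β +
            ((m : ℂ) * sgn i * epsUp α β) * hs2
    · simp only [hij, false_and, if_false, mul_zero, zero_mul, smul_zero, zero_smul,
        add_zero, zero_add, neg_zero, ite_false, mul_ite, mul_one, ite_self]
  · -- {Qtm, Qtm}
    intro i j α β A B
    simp only [Qtm, dUpIA, ηmLoA, Fin.sum_univ_two, mulLeft_add', mulLeft_smul',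
      acomm_add_left, acomm_add_right, acomm_sub_left, acomm_sub_right,
      acomm_smul_left, acomm_smul_right,
      acomm_dm_ηm, acomm_ηm_dm, acomm_ηm_ηm, acomm_dm_dm,
      smul_zero, zero_smul, smul_smul, add_zero, zero_add, sub_zero, zero_sub]
    rcases eq_or_ne i j with rfl | hij
    · fin_cases A <;> fin_cases B <;>
        simp [epsLo_eq, epsUp00, epsUp01, epsUp10, epsUp11]
      all_goals match_scalars
      all_goals first
        | ring1
        | linear_combination (-2 * Complex.sin θ * Complex.cos θ * sgn i) * hlamt i α β +
            ((m : ℂ) * sgn i * epsUp α β) * hs2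
        | linear_combination (2 * Complex.sin θ * Complex.cos θ * sgn i) * hlamt i α β +
            (-(m : ℂ) * sgn i * epsUp α β) * hs2
        | linear_combination (-2 * Complex.sin θ * Complex.cos θ * sgn i) * hlamt i α β +
            (-(m : ℂ) * sgn i * epsUp α β) * hs2
        | linear_combination (2 * Complex.sin θ * Complex.cos θ * sgn i) * hlamt i α β +
            ((m : ℂ) * sgn i * epsUp α β) * hs2
    · simp only [hij, false_and, if_false, mul_zero, zero_mul, smul_zero, zero_smul,
        add_zero, zero_add, sub_zero, zero_sub, neg_zero, ite_false, mul_ite, mul_one,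
        ite_self]
  · -- {QmP, QtmP}
    intro α β A B
    simp only [QmP, QtmP, acomm_smul_left, acomm_smul_right, acomm_ηP_dP, smul_smul]
    match_scalars
    ring1
  · intro α β A B
    simp only [QmP, acomm_smul_left, acomm_smul_right, acomm_ηP_ηP, smul_zero]
  · intro α β A B
    simp only [QtmP, acomm_smul_left, acomm_smul_right, acomm_dP_dP, smul_zero]
  · intro i α β A B
    simp only [Qm, QmP, dUpIloA, Fin.sum_univ_two,
      acomm_add_left, acomm_add_right, acomm_smul_left, acomm_smul_right,
      acomm_ηm_ηP, acomm_dm_ηP, smul_zero, zero_smul, add_zero, zero_add]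
  · intro i α β A B
    simp only [Qm, QtmP, dUpIloA, Fin.sum_univ_two,
      acomm_add_left, acomm_add_right, acomm_smul_left, acomm_smul_right,
      acomm_ηm_dP, acomm_dm_dP, smul_zero, zero_smul, add_zero, zero_add]
  · intro i α β A B
    simp only [Qtm, QmP, dUpIA, ηmLoA, Fin.sum_univ_two, mulLeft_add', mulLeft_smul',
      acomm_add_left, acomm_add_right, acomm_sub_left, acomm_sub_right,
      acomm_smul_left, acomm_smul_right,
      acomm_dm_ηP, acomm_ηm_ηP, smul_zero, zero_smul, add_zero, zero_add, sub_zero,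
      zero_sub, neg_zero, sub_self]
  · intro i α β A B
    simp only [Qtm, QtmP, dUpIA, ηmLoA, Fin.sum_univ_two, mulLeft_add', mulLeft_smul',
      acomm_add_left, acomm_add_right, acomm_sub_left, acomm_sub_right,
      acomm_smul_left, acomm_smul_right,
      acomm_dm_dP, acomm_ηm_dP, smul_zero, zero_smul, add_zero, zero_add, sub_zero,
      zero_sub, neg_zero, sub_self]
end
end

section
/- Let θ ∈ ℝ with cos²θ ≠ sin²θ. If M ∈ Λ satisfies Q_α^A M = 0 and Q̃_{α̇A} M = 0 for all α, α̇, A ∈ {1,2}, then δ^A · M = 0 in Λ for A = 1,2. -/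
/-!
Common setup: spinor-helicity kinematics over ℂ and the exterior (Grassmann) algebra Λ
on the 10 generators η_{iI}^A (i,I,A ∈ {1,2}) and η_P^A (A ∈ {1,2}).
Index value `0 : Fin 2` corresponds to the index "1" of the paper, `1 : Fin 2` to "2".
-/

noncomputable section

open scoped BigOperators

variable (lam lamt : Fin 2 → Matrix (Fin 2) (Fin 2) ℂ) (lamP lamtP : Fin 2 → ℂ)
  (ζ ξ : Fin 2 → ℂ)

variable (θ : ℝ)

lemma kin (lam lamt : Fin 2 → Matrix (Fin 2) (Fin 2) ℂ) (lamP lamtP : Fin 2 → ℂ)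
    (m : ℝ) (x : ℂ) (hm : 0 < m) (hos : OnShell lam lamt m)
    (hmc : MomCons lam lamt lamP lamtP) (hxf : XFac lam lamt lamP lamtP m x) :
    ∀ i I : Fin 2, angB lamtP (col lamt i I) = sgn i * x * angB lamP (col lam i I) := by
  have hm' : (m:ℂ) ≠ 0 := by exact_mod_cast hm.ne'
  have hxfc : ∀ α : Fin 2, (m:ℂ) * (x * lamP α) =
      ∑ β : Fin 2, pmat lam lamt 0 α β * (∑ γ : Fin 2, epsUp β γ * lamtP γ) := by
    intro α; rw [hxf α]; field_simp
  have hx0 := hxfc 0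
  have hx1 := hxfc 1
  have a00 := (hos 0 0 0).1
  have a01 := (hos 0 0 1).1
  have a10 := (hos 0 1 0).1
  have a11 := (hos 0 1 1).1
  have b00 := (hos 1 0 0).1
  have b01 := (hos 1 0 1).1
  have b10 := (hos 1 1 0).1
  have b11 := (hos 1 1 1).1
  have c00 := hmc 0 0
  have c01 := hmc 0 1
  have c10 := hmc 1 0
  have c11 := hmc 1 1
  simp only [pmat, epsUp, epsLo, angB, sqB, col, sgn, Fin.sum_univ_two] at *
  norm_num at hx0 hx1 a00 a01 a10 a11 b00 b01 b10 b11 c00 c01 c10 c11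
  intro i I
  fin_cases i <;> fin_cases I <;> norm_num <;> apply mul_left_cancel₀ hm'
  · linear_combination -(lam 0 0 0 * hx1) + lam 0 1 0 * hx0
      - (lamtP 1 * lamt 0 0 0 - lamtP 0 * lamt 0 1 0) * a10
      + (lamtP 1 * lamt 0 0 1 - lamtP 0 * lamt 0 1 1) * a00
  · linear_combination -(lam 0 0 1 * hx1) + lam 0 1 1 * hx0
      - (lamtP 1 * lamt 0 0 0 - lamtP 0 * lamt 0 1 0) * a11
      + (lamtP 1 * lamt 0 0 1 - lamtP 0 * lamt 0 1 1) * a01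
  · linear_combination -(lamtP 1 * lamt 1 0 0 - lamtP 0 * lamt 1 1 0) * b10
      + (lamtP 1 * lamt 1 0 1 - lamtP 0 * lamt 1 1 1) * b00
      + lamtP 1 * lam 1 0 0 * c10 - lamtP 1 * lam 1 1 0 * c00
      - lamtP 0 * lam 1 0 0 * c11 + lamtP 0 * lam 1 1 0 * c01
      + lam 1 0 0 * hx1 - lam 1 1 0 * hx0
  · linear_combination -(lamtP 1 * lamt 1 0 0 - lamtP 0 * lamt 1 1 0) * b11
      + (lamtP 1 * lamt 1 0 1 - lamtP 0 * lamt 1 1 1) * b01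
      + lamtP 1 * lam 1 0 1 * c10 - lamtP 1 * lam 1 1 1 * c00
      - lamtP 0 * lam 1 0 1 * c11 + lamtP 0 * lam 1 1 1 * c01
      + lam 1 0 1 * hx1 - lam 1 1 1 * hx0

set_option maxHeartbeats 2000000 in
lemma epsUp_00 : epsUp 0 0 = 0 := by norm_num [epsUp]
lemma epsUp_01 : epsUp 0 1 = 1 := by norm_num [epsUp]
lemma epsUp_10 : epsUp 1 0 = -1 := by norm_num [epsUp]
lemma epsUp_11 : epsUp 1 1 = 0 := by norm_num [epsUp]
lemma epsLo_00 : epsLo 0 0 = 0 := by norm_num [epsLo, epsUp]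
lemma epsLo_01 : epsLo 0 1 = -1 := by norm_num [epsLo, epsUp]
lemma epsLo_10 : epsLo 1 0 = 1 := by norm_num [epsLo, epsUp]
lemma epsLo_11 : epsLo 1 1 = 0 := by norm_num [epsLo, epsUp]
lemma sgn_0 : sgn 0 = 1 := by norm_num [sgn]
lemma sgn_1 : sgn 1 = -1 := by norm_num [sgn]


set_option maxHeartbeats 1000000 in
/-- a SUSY-invariant amplitude is annihilated by (i.e. proportional to)
the fermionic delta functions, provided cos²θ ≠ sin²θ. -/
theorem delta_support
    (lam lamt : Fin 2 → Matrix (Fin 2) (Fin 2) ℂ) (lamP lamtP : Fin 2 → ℂ)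
    (m θ : ℝ) (x : ℂ)
    (hm : 0 < m) (hos : OnShell lam lamt m) (hmc : MomCons lam lamt lamP lamtP)
    (hx : x ≠ 0) (hxf : XFac lam lamt lamP lamtP m x)
    (hθ : Real.cos θ ^ 2 ≠ Real.sin θ ^ 2)
    (M : Lam)
    (hQ : ∀ α A : Fin 2, Qtot lam lamP θ α A M = 0)
    (hQt : ∀ α A : Fin 2, Qttot lamt lamtP θ α A M = 0) :
    ∀ A : Fin 2, fdelta lam lamP A * M = 0 := by
  have hk := kin lam lamt lamP lamtP m x hm hos hmc hxf
  have hx2 : x * ((Real.cos θ : ℂ)^2 - (Real.sin θ : ℂ)^2) ≠ 0 := by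
    refine mul_ne_zero hx ?_
    rw [sub_ne_zero]
    exact_mod_cast hθ
  have E2 : ∀ B : Fin 2, ∑ i : Fin 2, ∑ I : Fin 2, (sgn i * x * angB lamP (col lam i I)) •
      ((Real.cos θ : ℂ) • dUpIA i I B M - ((Real.sin θ : ℂ) * sgn i) • (ηmLoA i I B * M)) = 0 := by
    intro B
    have raw : ∑ i : Fin 2, ∑ I : Fin 2, (angB lamtP (col lamt i I)) •
        ((Real.cos θ : ℂ) • dUpIA i I B M - ((Real.sin θ : ℂ) * sgn i) • (ηmLoA i I B * M)) = 0 := by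
      have g0 := hQt 0 B
      have g1 := hQt 1 B
      simp only [Qttot, Qtm, QtmP, dUpIA, ηmLoA, angB, col, sgn_0, sgn_1,
        epsLo_00, epsLo_01, epsLo_10, epsLo_11, epsUp_00, epsUp_01, epsUp_10, epsUp_11,
        zero_smul, one_smul, neg_smul, smul_neg, smul_zero, add_zero, zero_add, mul_zero, zero_mul, mul_one, one_mul, mul_neg, neg_mul, neg_neg,
        Fin.sum_univ_two, LinearMap.add_apply, LinearMap.sub_apply, LinearMap.smul_apply,
        LinearMap.sum_apply, LinearMap.mulLeft_apply, LinearMap.neg_apply, LinearMap.zero_apply, neg_zero, add_mul, smul_mul_assoc] at g0 g1 ⊢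
      linear_combination (norm := module) lamtP 1 • g0 - lamtP 0 • g1
    simp only [hk] at raw
    exact raw
  intro A
  fin_cases A
  · have h0 := hQ 0 0
    have h1 := hQ 1 0
    have e2 := E2 1
    have key : (x * ((Real.cos θ : ℂ)^2 - (Real.sin θ : ℂ)^2)) • (fdelta lam lamP 0 * M) = 0 := by
      simp only [Qtot, Qm, QmP, dUpIloA, fdelta, angB, col, sgn_0, sgn_1,
        epsLo_00, epsLo_01, epsLo_10, epsLo_11, epsUp_00, epsUp_01, epsUp_10, epsUp_11,
        zero_smul, one_smul, neg_smul, smul_neg, smul_zero, add_zero, zero_add, mul_zero, zero_mul, mul_one, one_mul, mul_neg, neg_mul, neg_neg, dUpIA, ηmLoA,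
        Fin.sum_univ_two, LinearMap.add_apply, LinearMap.smul_apply, LinearMap.sum_apply,
        LinearMap.sub_apply, LinearMap.mulLeft_apply, LinearMap.neg_apply, LinearMap.zero_apply, neg_zero, Finset.sum_mul, add_mul, smul_mul_assoc] at h0 h1 e2 ⊢
      linear_combination (norm := module) (x * (Real.cos θ : ℂ) * lamP 1) • h0
        - (x * (Real.cos θ : ℂ) * lamP 0) • h1 + (Real.sin θ : ℂ) • e2
    exact (smul_eq_zero.mp key).resolve_left hx2
  · have h0 := hQ 0 1
    have h1 := hQ 1 1
    have e2 := E2 0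
    have key : (x * ((Real.cos θ : ℂ)^2 - (Real.sin θ : ℂ)^2)) • (fdelta lam lamP 1 * M) = 0 := by
      simp only [Qtot, Qm, QmP, dUpIloA, fdelta, angB, col, sgn_0, sgn_1,
        epsLo_00, epsLo_01, epsLo_10, epsLo_11, epsUp_00, epsUp_01, epsUp_10, epsUp_11,
        zero_smul, one_smul, neg_smul, smul_neg, smul_zero, add_zero, zero_add, mul_zero, zero_mul, mul_one, one_mul, mul_neg, neg_mul, neg_neg, dUpIA, ηmLoA,
        Fin.sum_univ_two, LinearMap.add_apply, LinearMap.smul_apply, LinearMap.sum_apply,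
        LinearMap.sub_apply, LinearMap.mulLeft_apply, LinearMap.neg_apply, LinearMap.zero_apply, neg_zero, Finset.sum_mul, add_mul, smul_mul_assoc] at h0 h1 e2 ⊢
      linear_combination (norm := module) (x * (Real.cos θ : ℂ) * lamP 1) • h0
        - (x * (Real.cos θ : ℂ) * lamP 0) • h1 - (Real.sin θ : ℂ) • e2
    exact (smul_eq_zero.mp key).resolve_left hx2

end
end

section
/- Lowering relations for the building blocks: with c = cos θ, s = sin θ, define the odd operators D₋^A = Σ_{i,I} ⟨ζλᵢᴵ⟩ s σᵢ ∂/∂η_{iA}^I and D̃₋_A = Σ_{i,I} [ξλ̃ᵢᴵ] c ∂/∂η_i^{IA} on Λ. Then, under momentum conservation and the on-shell conditions: D₋^A H^B = 0, D̃₋_A H^B = −c [ξλ̃_P] δ_A^B, D₋^A H̄_B = s ⟨ζλ_P⟩ δ^A_B, and D̃₋_A H̄_B = 0, where H̄_B = ε_{BC} H̄^C. -/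
/-!
Common setup: spinor-helicity kinematics over ℂ and the exterior (Grassmann) algebra Λ
on the 10 generators η_{iI}^A (i,I,A ∈ {1,2}) and η_P^A (A ∈ {1,2}).
Index value `0 : Fin 2` corresponds to the index "1" of the paper, `1 : Fin 2` to "2".
-/

noncomputable section

open scoped BigOperators

variable (lam lamt : Fin 2 → Matrix (Fin 2) (Fin 2) ℂ) (lamP lamtP : Fin 2 → ℂ)
  (ζ ξ : Fin 2 → ℂ)

variable (θ : ℝ)

variable (θ : ℝ)

/-- D₋^A = Σ_{i,I} ⟨ζλᵢᴵ⟩ s σᵢ ∂/∂η_{iA}^I -/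
def Dminus (A : Fin 2) : Lam →ₗ[ℂ] Lam :=
  ∑ i : Fin 2, ∑ I : Fin 2,
    (angB ζ (col lam i I) * (Real.sin θ : ℂ) * sgn i) • dUpIloA i I A

/-- D̃₋_A = Σ_{i,I} [ξλ̃ᵢᴵ] c ∂/∂η_i^{IA} -/
def Dtminus (A : Fin 2) : Lam →ₗ[ℂ] Lam :=
  ∑ i : Fin 2, ∑ I : Fin 2,
    (sqB ξ (col lamt i I) * (Real.cos θ : ℂ)) • dUpIA i I A

theorem dm_ηm' (i I A i' I' A' : Fin 2) :
    dm i I A (ηm i' I' A') = if i = i' ∧ I = I' ∧ A = A' then 1 else 0 := by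
  rw [dm, ηm, CliffordAlgebra.contractLeft_ι]
  rw [gdual, LinearMap.proj_apply]
  rcases eq_or_ne (i,I,A) (i',I',A') with h | h
  · simp_all [Prod.ext_iff, Pi.single_apply]
  · rw [Pi.single_apply, if_neg (by simpa [eq_comm] using h)]
    rw [if_neg (by simpa [Prod.ext_iff, not_and] using h)]
    exact map_zero _

theorem dm_sum (d : Fin 2 → Fin 2 → Fin 2 → ℂ) (i J C : Fin 2) :
    dm i J C (∑ i' : Fin 2, ∑ I' : Fin 2, ∑ C' : Fin 2, d i' I' C' • ηm i' I' C')
      = (d i J C) • (1 : Lam) := by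
  fin_cases i <;> fin_cases J <;> fin_cases C <;>
    simp [map_sum, map_smul, dm_ηm', Fin.sum_univ_two]

theorem contract_sum (e d : Fin 2 → Fin 2 → Fin 2 → ℂ) :
    (∑ i : Fin 2, ∑ J : Fin 2, ∑ C : Fin 2, e i J C • dm i J C)
        (∑ i : Fin 2, ∑ I : Fin 2, ∑ C : Fin 2, d i I C • ηm i I C)
      = (∑ i : Fin 2, ∑ J : Fin 2, ∑ C : Fin 2, e i J C * d i J C) • (1 : Lam) := by
  simp only [LinearMap.sum_apply, LinearMap.smul_apply]
  simp only [dm_sum]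
  simp only [Fin.sum_univ_two, smul_smul]
  module

theorem Dminus_eq (lam : Fin 2 → Matrix (Fin 2) (Fin 2) ℂ) (ζ : Fin 2 → ℂ) (θ : ℝ) (A : Fin 2) :
    Dminus lam ζ θ A
      = ∑ i : Fin 2, ∑ J : Fin 2, ∑ C : Fin 2,
          (∑ I : Fin 2, angB ζ (col lam i I) * (Real.sin θ : ℂ) * sgn i
            * (epsLo I J * epsUp A C)) • dm i J C := by
  simp only [Dminus, dUpIloA, Fin.sum_univ_two, smul_add, smul_smul]
  module

theorem Dtminus_eq (lamt : Fin 2 → Matrix (Fin 2) (Fin 2) ℂ) (ξ : Fin 2 → ℂ) (θ : ℝ) (A : Fin 2) :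
    Dtminus lamt ξ θ A
      = ∑ i : Fin 2, ∑ J : Fin 2, ∑ C : Fin 2,
          (∑ I : Fin 2, sqB ξ (col lamt i I) * (Real.cos θ : ℂ)
            * (-epsLo I J) * (if C = A then 1 else 0)) • dm i J C := by
  fin_cases A <;>
    ( simp only [Dtminus, dUpIA, Fin.sum_univ_two, smul_add, smul_smul]
      norm_num
      try module )

theorem Ha_eq (lam : Fin 2 → Matrix (Fin 2) (Fin 2) ℂ) (lamP ζ : Fin 2 → ℂ) (B : Fin 2) :
    Ha lam lamP ζ B
      = ∑ i : Fin 2, ∑ I : Fin 2, ∑ C : Fin 2,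
          ((angB ζ lamP)⁻¹ * angB ζ (col lam i I) * (if C = B then 1 else 0)) • ηm i I C := by
  fin_cases B <;>
    ( simp only [Ha, Fin.sum_univ_two, smul_add, smul_smul]
      norm_num
      try module )

theorem HbLo_eq (lamt : Fin 2 → Matrix (Fin 2) (Fin 2) ℂ) (lamtP ξ : Fin 2 → ℂ) (B : Fin 2) :
    HbLo lamt lamtP ξ B
      = ∑ i : Fin 2, ∑ I : Fin 2, ∑ C : Fin 2,
          (epsLo B C * ((sqB ξ lamtP)⁻¹ * (sgn i * sqB ξ (col lamt i I)))) • ηm i I C := by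
  fin_cases B <;>
    ( simp only [HbLo, Hb, epsLo, epsUp, sgn, Fin.sum_univ_two, smul_add, smul_smul]
      norm_num
      try module )

set_option maxHeartbeats 1000000 in
/-- lowering relations for the building blocks. -/
theorem lowering_relations
    (lam lamt : Fin 2 → Matrix (Fin 2) (Fin 2) ℂ) (lamP lamtP : Fin 2 → ℂ)
    (m θ : ℝ) (hm : 0 < m) (hos : OnShell lam lamt m)
    (hmc : MomCons lam lamt lamP lamtP)
    (ζ ξ : Fin 2 → ℂ) (hζ : angB ζ lamP ≠ 0) (hξ : sqB ξ lamtP ≠ 0) :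
    (∀ A B : Fin 2, Dminus lam ζ θ A (Ha lam lamP ζ B) = 0)
    ∧ (∀ A B : Fin 2,
        Dtminus lamt ξ θ A (Ha lam lamP ζ B)
          = (-(Real.cos θ : ℂ) * sqB ξ lamtP * (if A = B then 1 else 0)) • (1 : Lam))
    ∧ (∀ A B : Fin 2,
        Dminus lam ζ θ A (HbLo lamt lamtP ξ B)
          = ((Real.sin θ : ℂ) * angB ζ lamP * (if A = B then 1 else 0)) • (1 : Lam))
    ∧ (∀ A B : Fin 2, Dtminus lamt ξ θ A (HbLo lamt lamtP ξ B) = 0) := by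
  have h00 := hmc 0 0; have h01 := hmc 0 1; have h10 := hmc 1 0; have h11 := hmc 1 1
  simp only [pmat, epsLo, epsUp, Fin.sum_univ_two] at h00 h01 h10 h11
  norm_num at h00 h01 h10 h11
  have key : (angB ζ (col lam 0 0) * sqB ξ (col lamt 0 1)
        - angB ζ (col lam 0 1) * sqB ξ (col lamt 0 0))
      + (angB ζ (col lam 1 0) * sqB ξ (col lamt 1 1)
        - angB ζ (col lam 1 1) * sqB ξ (col lamt 1 0))
      = angB ζ lamP * sqB ξ lamtP := by
    simp only [angB, sqB, col]
    linear_combination (ζ 1 * ξ 1) * h00 - (ζ 1 * ξ 0) * h01 - (ζ 0 * ξ 1) * h10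
      + (ζ 0 * ξ 0) * h11
  refine ⟨?_, ?_, ?_, ?_⟩
  · intro A B
    rw [Dminus_eq, Ha_eq, contract_sum]
    apply smul_eq_zero_of_left
    fin_cases A <;> fin_cases B <;>
      ( simp only [Fin.sum_univ_two, epsLo, epsUp, sgn]
        norm_num
        try ring )
  · intro A B
    rw [Dtminus_eq, Ha_eq, contract_sum]
    refine congrArg (fun z : ℂ => z • (1 : Lam)) ?_
    fin_cases A <;> fin_cases B <;>
      ( simp only [Fin.sum_univ_two, epsLo, epsUp, sgn]
        norm_num
        try field_simp
        try ring
        try linear_combination (Complex.cos (θ:ℂ) * angB ζ lamP) * key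
        try linear_combination (-(Complex.cos (θ:ℂ) * angB ζ lamP)) * key
        try linear_combination (Complex.cos (θ:ℂ)) * key
        try linear_combination (-(Complex.cos (θ:ℂ))) * key )
  · intro A B
    rw [Dminus_eq, HbLo_eq, contract_sum]
    refine congrArg (fun z : ℂ => z • (1 : Lam)) ?_
    fin_cases A <;> fin_cases B <;>
      ( simp only [Fin.sum_univ_two, epsLo, epsUp, sgn]
        norm_num
        try field_simp
        try ring
        try linear_combination (Complex.sin (θ:ℂ) * sqB ξ lamtP) * key
        try linear_combination (-(Complex.sin (θ:ℂ) * sqB ξ lamtP)) * key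
        try linear_combination (Complex.sin (θ:ℂ)) * key
        try linear_combination (-(Complex.sin (θ:ℂ))) * key )
  · intro A B
    rw [Dtminus_eq, HbLo_eq, contract_sum]
    apply smul_eq_zero_of_left
    fin_cases A <;> fin_cases B <;>
      ( simp only [Fin.sum_univ_two, epsLo, epsUp, sgn]
        norm_num
        try ring )
end
end
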